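/- arXiv:2506.16879 — 3 statements merged into one kernel-verified Lean document; each statement's English description precedes it below -/
import Mathlib

section
/- Let R be a finite list of positive integers of length l, where l is odd. Suppose exactly o values appear in R with odd multiplicity, where o is odd. Then the number of pairs of positions i < j with r_i ≠ r_j is even if ⌊o/2⌋ is even, and odd if ⌊o/2⌋ is odd. -/
/-!
Counting ordered pairs of positions, `2 X + ∑ₜ cₜ² = l²`, where `X` is the number of unequal
pairs `i < j` and `cₜ` is the multiplicity of `t`. Odd squares are `1 mod 8` and even squares
`0 mod 4`, so `∑ₜ cₜ² ≡ o (mod 4)` and `l² ≡ 1 (mod 8)`; hence `2 X ≡ 1 - o (mod 4)`, which for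
odd `o` says `X ≡ ⌊o/2⌋ (mod 2)`.
-/

open Finset

namespace Nat

lemma sq_mod_eight_of_odd {c : ℕ} (hc : Odd c) : c ^ 2 % 8 = 1 := by
  obtain ⟨k, rfl⟩ := hc
  obtain ⟨m, hm⟩ := Nat.even_mul_succ_self k
  have : (2 * k + 1) ^ 2 = 4 * (k * (k + 1)) + 1 := by ring
  omega

lemma sq_mod_four_of_even {c : ℕ} (hc : Even c) : c ^ 2 % 4 = 0 := by
  obtain ⟨k, rfl⟩ := hc
  have : (k + k) ^ 2 = 4 * k ^ 2 := by ring
  omega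

end Nat

lemma sum_sq_mod_four_eq_card_odd {β : Type*} (s : Finset β) (c : β → ℕ) :
    (∑ b ∈ s, c b ^ 2) % 4 = #{b ∈ s | Odd (c b)} % 4 := by
  have hsq : ∀ b ∈ s, c b ^ 2 % 4 = if Odd (c b) then 1 else 0 := by
    intro b _
    split_ifs with hb
    · have := Nat.sq_mod_eight_of_odd hb
      omega
    · exact Nat.sq_mod_four_of_even (Nat.not_odd_iff_even.mp hb)
  rw [Finset.sum_nat_mod, Finset.sum_congr rfl hsq, ← Finset.card_filter]

section UnequalPairs

variable {ι α : Type*} [Fintype ι] [DecidableEq α] (f : ι → α)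

lemma card_eq_eq_sum_sq :
    #{p : ι × ι | f p.1 = f p.2} = ∑ a ∈ univ.image f, #{i | f i = a} ^ 2 := by
  rw [Finset.card_eq_sum_card_fiberwise (f := fun p : ι × ι => f p.1) (t := univ.image f)
    (fun p _ => Finset.mem_image_of_mem f (Finset.mem_univ _))]
  refine Finset.sum_congr rfl fun a _ => ?_
  rw [sq, ← Finset.card_product, Finset.filter_filter]
  congr 1
  ext p
  simp only [Finset.mem_filter, Finset.mem_univ, true_and, Finset.mem_product]
  constructor
  · rintro ⟨h, rfl⟩; exact ⟨rfl, h.symm⟩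
  · rintro ⟨h1, h2⟩; exact ⟨h1.trans h2.symm, h1⟩

variable [LinearOrder ι]

lemma card_lt_ne_eq_card_gt_ne :
    #{p : ι × ι | p.1 < p.2 ∧ f p.1 ≠ f p.2} = #{p : ι × ι | p.2 < p.1 ∧ f p.1 ≠ f p.2} :=
  Finset.card_nbij' Prod.swap Prod.swap
    (fun p hp => by simp_all [eq_comm]) (fun p hp => by simp_all [eq_comm])
    (fun _ _ => rfl) (fun _ _ => rfl)

lemma two_mul_card_lt_ne :
    2 * #{p : ι × ι | p.1 < p.2 ∧ f p.1 ≠ f p.2} = #{p : ι × ι | f p.1 ≠ f p.2} := by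
  rw [two_mul]
  nth_rewrite 2 [card_lt_ne_eq_card_gt_ne]
  rw [← Finset.card_filter_add_card_filter_not (fun p : ι × ι => p.1 < p.2)
    (s := {p | f p.1 ≠ f p.2}), Finset.filter_filter, Finset.filter_filter]
  congr 2 <;> ext p <;> simp only [Finset.mem_filter, Finset.mem_univ, true_and]
  · exact and_comm
  · refine ⟨fun ⟨hlt, hne⟩ => ⟨hne, hlt.not_gt⟩, fun ⟨hne, hnlt⟩ => ⟨?_, hne⟩⟩
    exact (not_lt.mp hnlt).lt_of_ne fun h => hne (h ▸ rfl)

lemma two_mul_card_lt_ne_add_sum_sq :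
    2 * #{p : ι × ι | p.1 < p.2 ∧ f p.1 ≠ f p.2} + ∑ a ∈ univ.image f, #{i | f i = a} ^ 2 =
      Fintype.card ι ^ 2 := by
  rw [two_mul_card_lt_ne, ← card_eq_eq_sum_sq, add_comm,
    Finset.card_filter_add_card_filter_not, Finset.card_univ, Fintype.card_prod, sq]

end UnequalPairs

lemma List.two_mul_card_unequal_pairs_add_sum_sq_count {α : Type*} [DecidableEq α] (R : List α) :
    2 * #{p : Fin R.length × Fin R.length | p.1 < p.2 ∧ R.get p.1 ≠ R.get p.2} +
      ∑ t ∈ R.toFinset, R.count t ^ 2 = R.length ^ 2 := by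
  have hcount (t : α) : #{i | R.get i = t} = R.count t :=
    Fin.card_filter_univ_eq_vector_get_eq_count t ⟨R, rfl⟩
  simpa only [Fin.univ_image_get, hcount, Fintype.card_fin] using
    two_mul_card_lt_ne_add_sum_sq R.get

theorem parity_unequal_pairs_odd_length_general (R : List ℕ)
    (hlen : Odd R.length) (o : ℕ)
    (ho : (R.toFinset.filter (fun t => Odd (R.count t))).card = o)
    (hoodd : Odd o) :
    (Finset.univ.filter
        (fun p : Fin R.length × Fin R.length =>
          p.1 < p.2 ∧ R.get p.1 ≠ R.get p.2)).card % 2 = (o / 2) % 2 := by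
  have hpairs := R.two_mul_card_unequal_pairs_add_sum_sq_count
  have hsum := sum_sq_mod_four_eq_card_odd R.toFinset R.count
  have hl := Nat.sq_mod_eight_of_odd hlen
  rw [ho] at hsum
  obtain ⟨j, rfl⟩ := hoodd
  omega

theorem parity_unequal_pairs_odd_length (R : List ℕ) (hpos : ∀ r ∈ R, 0 < r)
    (hlen : Odd R.length) (o : ℕ)
    (ho : (R.toFinset.filter (fun t => Odd (R.count t))).card = o)
    (hoodd : Odd o) :
    (Finset.univ.filter
        (fun p : Fin R.length × Fin R.length =>
          p.1 < p.2 ∧ R.get p.1 ≠ R.get p.2)).card % 2 = (o / 2) % 2 :=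
  parity_unequal_pairs_odd_length_general R hlen o ho hoodd
end

section
/- Let R be a finite list of positive integers of length l, where l is even. Suppose exactly o values appear in R with odd multiplicity (so o is even). Then the number of pairs of positions i < j with r_i ≠ r_j is even if and only if o/2 is even. -/
/-!
With `c_t` the multiplicity of `t` and `n = ∑ c_t`, the unequal pairs number
`C(n, 2) - ∑ C(c_t, 2)`. Since `C(m, 2) ≡ ⌊m / 2⌋ (mod 2)` and `n = 2 ∑ ⌊c_t / 2⌋ + o`, this is
congruent to `⌊n / 2⌋ - ∑ ⌊c_t / 2⌋ = o / 2` modulo `2`.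
-/

open Finset

theorem Nat.choose_two_mod_two : ∀ m : ℕ, m.choose 2 % 2 = m / 2 % 2
  | 0 | 1 => rfl
  | m + 2 => by
    have ih := choose_two_mod_two m
    have h2 : (m + 2).choose 2 = m + 1 + (m + 1).choose 2 := by
      simpa using Nat.choose_succ_succ' (m + 1) 1
    have h1 : (m + 1).choose 2 = m + m.choose 2 := by simpa using Nat.choose_succ_succ' m 1
    rw [Nat.add_div_right m two_pos]
    omega

section Pairs

variable {ι α : Type*} [Fintype ι] [LinearOrder ι] [DecidableEq α]

theorem card_filter_lt_and_apply_eq_eq_sum (f : ι → α) {T : Finset α} (hT : ∀ i, f i ∈ T) :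
    #{p : ι × ι | p.1 < p.2 ∧ f p.1 = f p.2} = ∑ t ∈ T, (#{i | f i = t}).choose 2 := by
  rw [card_eq_sum_card_fiberwise (f := fun p => f p.1) (t := T) (fun p _ => hT p.1)]
  refine sum_congr rfl fun t _ => ?_
  rw [← card_product_filter_lt]
  congr 1
  ext ⟨i, j⟩
  simp only [mem_filter, mem_univ, true_and, mem_product]
  constructor
  · rintro ⟨⟨hij, hf⟩, rfl⟩
    exact ⟨⟨rfl, hf.symm⟩, hij⟩
  · rintro ⟨⟨rfl, hj⟩, hij⟩
    exact ⟨⟨hij, hj.symm⟩, rfl⟩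

theorem card_filter_lt_and_apply_ne_add_sum (f : ι → α) {T : Finset α} (hT : ∀ i, f i ∈ T) :
    #{p : ι × ι | p.1 < p.2 ∧ f p.1 ≠ f p.2} + ∑ t ∈ T, (#{i | f i = t}).choose 2 =
      (Fintype.card ι).choose 2 := by
  have split := card_filter_add_card_filter_not (s := {p : ι × ι | p.1 < p.2})
    (fun p => f p.1 = f p.2)
  rw [filter_filter, filter_filter] at split
  rw [← card_filter_lt_and_apply_eq_eq_sum f hT, ← card_univ, ← card_product_filter_lt,
    univ_product_univ, ← split, add_comm]

end Pairs

namespace List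

variable {α : Type*} [DecidableEq α]

theorem card_filter_get_eq (l : List α) (t : α) : #{i : Fin l.length | l.get i = t} = l.count t :=
  Fin.card_filter_univ_eq_vector_get_eq_count t ⟨l, rfl⟩

theorem card_filter_lt_and_get_ne_add_sum (l : List α) :
    #{p : Fin l.length × Fin l.length | p.1 < p.2 ∧ l.get p.1 ≠ l.get p.2} +
      ∑ t ∈ l.toFinset, (l.count t).choose 2 = l.length.choose 2 := by
  simpa only [card_filter_get_eq, Fintype.card_fin] using
    card_filter_lt_and_apply_ne_add_sum l.get fun i => mem_toFinset.2 (l.get_mem i)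

theorem two_mul_sum_count_div_two_add_card_odd (l : List α) :
    2 * ∑ t ∈ l.toFinset, l.count t / 2 + #{t ∈ l.toFinset | Odd (l.count t)} = l.length := by
  rw [← sum_toFinset_count_eq_length, card_filter, mul_sum, ← sum_add_distrib]
  refine sum_congr rfl fun t _ => ?_
  split_ifs with h
  · have := Nat.odd_iff.1 h; omega
  · have := Nat.even_iff.1 (Nat.not_odd_iff_even.1 h); omega

end List

theorem parity_unequal_pairs_even_length_general (R : List ℕ) (o : ℕ)
    (ho : (R.toFinset.filter (fun t => Odd (R.count t))).card = o)
    (hoeven : Even o) :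
    Even (Finset.univ.filter
        (fun p : Fin R.length × Fin R.length =>
          p.1 < p.2 ∧ R.get p.1 ≠ R.get p.2)).card ↔ Even (o / 2) := by
  have hpairs := R.card_filter_lt_and_get_ne_add_sum
  have hlength := R.two_mul_sum_count_div_two_add_card_odd
  have hsum : (∑ t ∈ R.toFinset, (R.count t).choose 2) % 2 =
      (∑ t ∈ R.toFinset, R.count t / 2) % 2 := by
    rw [sum_nat_mod, sum_nat_mod (f := fun t => R.count t / 2)]
    exact congrArg (· % 2) (sum_congr rfl fun t _ => Nat.choose_two_mod_two _)
  have hn := Nat.choose_two_mod_two R.length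
  simp only [Nat.even_iff] at hoeven ⊢
  omega

theorem parity_unequal_pairs_even_length (R : List ℕ) (hpos : ∀ r ∈ R, 0 < r)
    (hlen : Even R.length) (o : ℕ)
    (ho : (R.toFinset.filter (fun t => Odd (R.count t))).card = o)
    (hoeven : Even o) :
    Even (Finset.univ.filter
        (fun p : Fin R.length × Fin R.length =>
          p.1 < p.2 ∧ R.get p.1 ≠ R.get p.2)).card ↔ Even (o / 2) :=
  parity_unequal_pairs_even_length_general R o ho hoeven
end

section
/- Let λ be a partition of an even positive integer d, and suppose the number o(λ) of parts-values occurring an odd number of times in λ is at least 2, with the number c of odd values among them being even. If c = 0, then the partition λ' obtained from λ by subtracting 1 from each part and deleting zeros has at least two odd values occurring an odd number of times; if c > 0, then λ' has at least one even value occurring an odd number of times. -/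
/-- `oddValues μ` : the set of distinct values occurring with odd multiplicity
in the multiset `μ`. -/
def oddMultValues (μ : Multiset ℕ) : Finset ℕ :=
  μ.toFinset.filter (fun t => Odd (μ.count t))

/-- The partition obtained by subtracting 1 from each part and deleting zeros. -/
def shiftDown (μ : Multiset ℕ) : Multiset ℕ :=
  (μ.map (· - 1)).filter (0 < ·)

/-!
A part `t ≥ 2` of `λ` becomes the part `t - 1` of `λ'` with the same multiplicity, so
`t ↦ t - 1` maps the values of odd multiplicity of `λ`, other than `1`, injectively into
those of `λ'`, swapping parity. If `c = 0`, every such value of `λ` is even and positive,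
hence at least `2`, and they give at least two odd values in `λ'`. If `c > 0`, then `c ≥ 2`
as `c` is even, so some odd value of `λ` other than `1` survives as an even value in `λ'`.
-/

open Finset

lemma count_shiftDown (μ : Multiset ℕ) {t : ℕ} (ht : 0 < t) :
    (shiftDown μ).count t = μ.count (t + 1) := by
  rw [shiftDown, Multiset.count_filter, if_pos ht, Multiset.count_map,
    Multiset.count_eq_card_filter_eq]
  congr 1
  exact Multiset.filter_congr fun a _ => by omega

lemma mem_oddMultValues {μ : Multiset ℕ} {t : ℕ} :
    t ∈ oddMultValues μ ↔ Odd (μ.count t) := by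
  rw [oddMultValues, mem_filter, Multiset.mem_toFinset, and_iff_right_iff_imp]
  exact fun h => Multiset.count_pos.mp h.pos

lemma sub_one_mem_oddMultValues_shiftDown {μ : Multiset ℕ} {t : ℕ}
    (ht : t ∈ oddMultValues μ) (h2t : 2 ≤ t) : t - 1 ∈ oddMultValues (shiftDown μ) := by
  rw [mem_oddMultValues, count_shiftDown μ (by omega), Nat.sub_add_cancel (by omega)]
  exact mem_oddMultValues.mp ht

lemma card_le_card_filter_oddMultValues_shiftDown {μ : Multiset ℕ} {s : Finset ℕ}
    {q : ℕ → Prop} [DecidablePred q]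
    (hs : ∀ t ∈ s, t ∈ oddMultValues μ ∧ 2 ≤ t ∧ q (t - 1)) :
    #s ≤ #((oddMultValues (shiftDown μ)).filter q) := by
  refine card_le_card_of_injOn (· - 1) (fun t ht => ?_) (fun a ha b hb hab => ?_)
  · obtain ⟨hmem, h2t, hq⟩ := hs t ht
    exact mem_filter.mpr ⟨sub_one_mem_oddMultValues_shiftDown hmem h2t, hq⟩
  · have := (hs a ha).2.1
    have := (hs b hb).2.1
    simp only at hab
    omega

lemma card_filter_even_oddMultValues_le {μ : Multiset ℕ} (hμ : ∀ a ∈ μ, 0 < a) :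
    #((oddMultValues μ).filter Even) ≤ #((oddMultValues (shiftDown μ)).filter Odd) := by
  refine card_le_card_filter_oddMultValues_shiftDown fun t ht => ?_
  obtain ⟨hmem, ⟨k, hk⟩⟩ := mem_filter.mp ht
  have := hμ t (Multiset.mem_toFinset.mp (mem_filter.mp hmem).1)
  exact ⟨hmem, by omega, ⟨k - 1, by omega⟩⟩

lemma card_filter_odd_oddMultValues_le (μ : Multiset ℕ) :
    #((oddMultValues μ).filter Odd) ≤ #((oddMultValues (shiftDown μ)).filter Even) + 1 := by
  have hle := card_le_card_filter_oddMultValues_shiftDown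
    (μ := μ) (s := ((oddMultValues μ).filter Odd).erase 1) (q := Even) fun t ht => by
      obtain ⟨hne, hmem, ⟨k, hk⟩⟩ := mem_erase.mp ht |>.imp_right mem_filter.mp
      exact ⟨hmem, by omega, ⟨k, by omega⟩⟩
  have := pred_card_le_card_erase (s := (oddMultValues μ).filter Odd) (a := 1)
  omega

theorem shifted_partition_odd_multiplicities_general
    (lam : Multiset ℕ) (hpos : ∀ a ∈ lam, 0 < a)
    (ho : 2 ≤ (oddMultValues lam).card)
    (c : ℕ) (hc : ((oddMultValues lam).filter (fun t => Odd t)).card = c)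
    (hceven : Even c) :
    (c = 0 → 2 ≤ ((oddMultValues (shiftDown lam)).filter (fun t => Odd t)).card) ∧
    (0 < c → 1 ≤ ((oddMultValues (shiftDown lam)).filter (fun t => Even t)).card) := by
  have hsplit : #((oddMultValues lam).filter Even) + c = #(oddMultValues lam) := by
    simp only [← hc, ← Nat.not_even_iff_odd, card_filter_add_card_filter_not]
  refine ⟨fun hc0 => ?_, fun hcpos => ?_⟩
  · calc 2 ≤ #((oddMultValues lam).filter Even) := by omega
      _ ≤ _ := card_filter_even_oddMultValues_le hpos
  · have hc2 : 2 ≤ c := by obtain ⟨k, hk⟩ := hceven; omega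
    have := hc ▸ card_filter_odd_oddMultValues_le lam
    show 1 ≤ #((oddMultValues (shiftDown lam)).filter Even)
    omega

theorem shifted_partition_odd_multiplicities
    (d : ℕ) (hd : 0 < d) (hdeven : Even d)
    (lam : Multiset ℕ) (hpos : ∀ a ∈ lam, 0 < a) (hsum : lam.sum = d)
    (ho : 2 ≤ (oddMultValues lam).card)
    (c : ℕ) (hc : ((oddMultValues lam).filter (fun t => Odd t)).card = c)
    (hceven : Even c) :
    (c = 0 → 2 ≤ ((oddMultValues (shiftDown lam)).filter (fun t => Odd t)).card) ∧
    (0 < c → 1 ≤ ((oddMultValues (shiftDown lam)).filter (fun t => Even t)).card) :=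
  shifted_partition_odd_multiplicities_general lam hpos ho c hc hceven
end
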